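/- arXiv:2510.15819 — 2 statements merged into one kernel-verified Lean document; each statement's English description precedes it below -/
import Mathlib

section
/- For vector fields u, v, w in H^1_0(Ω)^d with d=2 or 3, define c(u,v,w) = 2(D(u)v, w) + ((∇·u)v, w), where D(u) = (∇u + (∇u)^T)/2 and (·,·) is the L² inner product. Then c(u,u,v) = c(u,v,u). -/
open MeasureTheory Finset

/-- Partial derivative ∂_j u_i at x. -/
noncomputable def pd {d : ℕ} (u : (Fin d → ℝ) → (Fin d → ℝ)) (j i : Fin d)
    (x : Fin d → ℝ) : ℝ := fderiv ℝ u x (Pi.single j 1) i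

/-- Symmetric gradient D(u)_{ij} = (∂_j u_i + ∂_i u_j)/2. -/
noncomputable def symGrad {d : ℕ} (u : (Fin d → ℝ) → (Fin d → ℝ)) (i j : Fin d)
    (x : Fin d → ℝ) : ℝ := (pd u j i x + pd u i j x) / 2

/-- Divergence ∇·u at x. -/
noncomputable def divg {d : ℕ} (u : (Fin d → ℝ) → (Fin d → ℝ)) (x : Fin d → ℝ) : ℝ :=
  ∑ i, pd u i i x

/-- EMAC trilinear form c(u,v,w) = 2(D(u)v, w) + ((∇·u)v, w) over Ω. -/
noncomputable def cform {d : ℕ} (Ω : Set (Fin d → ℝ))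
    (u v w : (Fin d → ℝ) → (Fin d → ℝ)) : ℝ :=
  ∫ x in Ω, (2 * ∑ i, (∑ j, symGrad u i j x * v x j) * w x i
      + divg u x * ∑ i, v x i * w x i)

theorem cform_symm_swap {d : ℕ} (hd : d = 2 ∨ d = 3) (Ω : Set (Fin d → ℝ))
    (hΩ : IsOpen Ω) (hΩb : Bornology.IsBounded Ω)
    (u v : (Fin d → ℝ) → (Fin d → ℝ))
    (hu : ContDiff ℝ 1 u) (hus : HasCompactSupport u) (husupp : tsupport u ⊆ Ω)
    (hv : ContDiff ℝ 1 v) (hvs : HasCompactSupport v) (hvsupp : tsupport v ⊆ Ω) :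
    cform Ω u u v = cform Ω u v u := by
  unfold cform
  congr 1
  funext x
  have h1 : ∑ i, (∑ j, symGrad u i j x * u x j) * v x i
      = ∑ i, (∑ j, symGrad u i j x * v x j) * u x i := by
    simp only [Finset.sum_mul]
    rw [Finset.sum_comm]
    refine Finset.sum_congr rfl fun i _ => Finset.sum_congr rfl fun j _ => ?_
    have hsym : symGrad u j i x = symGrad u i j x := by unfold symGrad; ring
    rw [hsym]; ring
  have h2 : ∑ i, u x i * v x i = ∑ i, v x i * u x i :=
    Finset.sum_congr rfl fun i _ => mul_comm _ _
  rw [h1, h2]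
end

section
/- For vector fields u, v in H^1_0(Ω)^d, the EMAC trilinear form satisfies c(u,v,u) = -½ c(v,u,u), where c(u,v,w) = 2(D(u)v, w) + ((∇·u)v, w). -/
open MeasureTheory Finset

/-! With `F = (u·v) u + ½ |u|² v`, the product rule and one exchange of the two summation
indices give, pointwise, `div F = (integrand of c(u,v,u)) + ½ (integrand of c(v,u,u))`.
Since `F` is `C¹` with compact support inside `Ω`, the integral of its divergence vanishes. -/

theorem integral_fderiv_apply_eq_zero {E G : Type*} [NormedAddCommGroup E] [NormedSpace ℝ E]
    [NormedAddCommGroup G] [NormedSpace ℝ G] [MeasurableSpace E] [BorelSpace E]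
    [FiniteDimensional ℝ E] {μ : Measure E} [μ.IsAddHaarMeasure] {g : E → G}
    (hg : ContDiff ℝ 1 g) (hgs : HasCompactSupport g) (v : E) :
    ∫ x, fderiv ℝ g x v ∂μ = 0 := by
  -- integration by parts against the constant function `1`
  have hg' : Integrable (fun x => fderiv ℝ g x v) μ :=
    ((hg.continuous_fderiv one_ne_zero).clm_apply continuous_const).integrable_of_hasCompactSupport
      (hgs.fderiv_apply (𝕜 := ℝ) v)
  have h := integral_smul_fderiv_eq_neg_fderiv_smul_of_integrable (μ := μ) (v := v)
    (f := fun _ => (1 : ℝ)) (by simp) (by simpa using hg')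
    (by simpa using hg.continuous.integrable_of_hasCompactSupport hgs)
    (fun _ _ => differentiableAt_const _) (fun x _ => hg.differentiable one_ne_zero x)
  simpa using h

section Calculus

variable {d : ℕ} {x : Fin d → ℝ}

theorem pd_eq_fderiv_apply {u : (Fin d → ℝ) → (Fin d → ℝ)} (hu : DifferentiableAt ℝ u x)
    (j i : Fin d) : pd u j i x = fderiv ℝ (fun y => u y i) x (Pi.single j 1) := by
  simp [pd, fderiv_apply hu i]

theorem continuous_pd {u : (Fin d → ℝ) → (Fin d → ℝ)} (hu : ContDiff ℝ 1 u) (j i : Fin d) :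
    Continuous (pd u j i) :=
  (continuous_apply i).comp ((hu.continuous_fderiv one_ne_zero).clm_apply continuous_const)

theorem pd_add {u w : (Fin d → ℝ) → (Fin d → ℝ)} (hu : DifferentiableAt ℝ u x)
    (hw : DifferentiableAt ℝ w x) (j i : Fin d) :
    pd (fun y => u y + w y) j i x = pd u j i x + pd w j i x := by
  simp [pd, fderiv_fun_add hu hw]

theorem pd_smul {φ : (Fin d → ℝ) → ℝ} {w : (Fin d → ℝ) → (Fin d → ℝ)}
    (hφ : DifferentiableAt ℝ φ x) (hw : DifferentiableAt ℝ w x) (j i : Fin d) :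
    pd (fun y => φ y • w y) j i x = φ x * pd w j i x + fderiv ℝ φ x (Pi.single j 1) * w x i := by
  simp [pd, fderiv_fun_smul hφ hw]

theorem divg_add {u w : (Fin d → ℝ) → (Fin d → ℝ)} (hu : DifferentiableAt ℝ u x)
    (hw : DifferentiableAt ℝ w x) : divg (fun y => u y + w y) x = divg u x + divg w x := by
  simp [divg, pd_add hu hw, sum_add_distrib]

theorem divg_smul {φ : (Fin d → ℝ) → ℝ} {w : (Fin d → ℝ) → (Fin d → ℝ)}
    (hφ : DifferentiableAt ℝ φ x) (hw : DifferentiableAt ℝ w x) :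
    divg (fun y => φ y • w y) x
      = φ x * divg w x + ∑ i, fderiv ℝ φ x (Pi.single i 1) * w x i := by
  simp [divg, pd_smul hφ hw, sum_add_distrib, mul_sum]

theorem fderiv_sum_mul_apply {u w : (Fin d → ℝ) → (Fin d → ℝ)} (hu : DifferentiableAt ℝ u x)
    (hw : DifferentiableAt ℝ w x) (j : Fin d) :
    fderiv ℝ (fun y => ∑ k, u y k * w y k) x (Pi.single j 1)
      = ∑ k, (pd u j k x * w x k + u x k * pd w j k x) := by
  have hu' (k : Fin d) : DifferentiableAt ℝ (fun y => u y k) x := differentiableAt_pi.1 hu k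
  have hw' (k : Fin d) : DifferentiableAt ℝ (fun y => w y k) x := differentiableAt_pi.1 hw k
  rw [fderiv_fun_sum fun k _ => (hu' k).fun_mul (hw' k), _root_.sum_apply]
  refine sum_congr rfl fun k _ => ?_
  rw [fderiv_fun_mul (hu' k) (hw' k), pd_eq_fderiv_apply hu, pd_eq_fderiv_apply hw]
  simp only [add_apply, smul_apply, smul_eq_mul]
  ring

theorem differentiableAt_sum_mul {u w : (Fin d → ℝ) → (Fin d → ℝ)} (hu : DifferentiableAt ℝ u x)
    (hw : DifferentiableAt ℝ w x) : DifferentiableAt ℝ (fun y => ∑ k, u y k * w y k) x :=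
  .fun_sum fun k _ => (differentiableAt_pi.1 hu k).mul (differentiableAt_pi.1 hw k)

theorem contDiff_sum_mul {n : WithTop ℕ∞} {u w : (Fin d → ℝ) → (Fin d → ℝ)}
    (hu : ContDiff ℝ n u) (hw : ContDiff ℝ n w) : ContDiff ℝ n (fun y => ∑ k, u y k * w y k) :=
  .sum fun k _ => (contDiff_pi.1 hu k).mul (contDiff_pi.1 hw k)

theorem sum_sum_eq_zero_of_add_swap_eq_zero (f : Fin d → Fin d → ℝ)
    (hf : ∀ i j, f i j + f j i = 0) : ∑ i, ∑ j, f i j = 0 := by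
  have h2 : 2 * ∑ i, ∑ j, f i j = ∑ i, ∑ j, (f i j + f j i) := by
    rw [two_mul]
    nth_rewrite 2 [sum_comm]
    simp only [← sum_add_distrib]
  simpa [hf] using h2

end Calculus

section Integration

variable {d : ℕ}

theorem HasCompactSupport.pd {F : (Fin d → ℝ) → (Fin d → ℝ)} (hF : HasCompactSupport F)
    (j i : Fin d) : HasCompactSupport (pd F j i) :=
  (hF.fderiv_apply (𝕜 := ℝ) _).comp_left (g := fun w : Fin d → ℝ => w i) rfl

theorem divg_eq_zero_of_notMem_tsupport {F : (Fin d → ℝ) → (Fin d → ℝ)} {x : Fin d → ℝ}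
    (hx : x ∉ tsupport F) : divg F x = 0 := by
  simp [divg, pd, fderiv_of_notMem_tsupport ℝ hx]

theorem integral_divg_eq_zero {F : (Fin d → ℝ) → (Fin d → ℝ)} (hF : ContDiff ℝ 1 F)
    (hFs : HasCompactSupport F) : ∫ x, divg F x = 0 := by
  unfold divg
  rw [integral_finsetSum _ fun i _ =>
    (continuous_pd hF i i).integrable_of_hasCompactSupport (hFs.pd i i)]
  refine sum_eq_zero fun i _ => ?_
  simp_rw [pd_eq_fderiv_apply ((hF.differentiable one_ne_zero) _)]
  exact integral_fderiv_apply_eq_zero (contDiff_pi.1 hF i)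
    (hFs.comp_left (g := fun w : Fin d → ℝ => w i) rfl) _

theorem setIntegral_divg_eq_zero {Ω : Set (Fin d → ℝ)} {F : (Fin d → ℝ) → (Fin d → ℝ)}
    (hF : ContDiff ℝ 1 F) (hFs : HasCompactSupport F) (hFΩ : tsupport F ⊆ Ω) :
    ∫ x in Ω, divg F x = 0 := by
  rw [setIntegral_eq_integral_of_forall_compl_eq_zero fun x hx =>
    divg_eq_zero_of_notMem_tsupport fun h => hx (hFΩ h)]
  exact integral_divg_eq_zero hF hFs

end Integration

noncomputable def emacFlux {d : ℕ} (u v : (Fin d → ℝ) → (Fin d → ℝ)) (y : Fin d → ℝ) :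
    Fin d → ℝ :=
  (∑ k, u y k * v y k) • u y + ((1 / 2) * ∑ k, u y k * u y k) • v y

theorem contDiff_emacFlux {d : ℕ} {n : WithTop ℕ∞} {u v : (Fin d → ℝ) → (Fin d → ℝ)}
    (hu : ContDiff ℝ n u) (hv : ContDiff ℝ n v) : ContDiff ℝ n (emacFlux u v) :=
  ((contDiff_sum_mul hu hv).smul hu).add
    ((contDiff_const.mul (contDiff_sum_mul hu hu)).smul hv)

theorem support_emacFlux_subset {d : ℕ} (u v : (Fin d → ℝ) → (Fin d → ℝ)) :
    Function.support (emacFlux u v) ⊆ Function.support u := fun y hy => by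
  by_contra h
  exact hy (by simp [emacFlux, Function.notMem_support.1 h])

noncomputable def cformIntegrand {d : ℕ} (u v w : (Fin d → ℝ) → (Fin d → ℝ))
    (x : Fin d → ℝ) : ℝ :=
  2 * ∑ i, (∑ j, symGrad u i j x * v x j) * w x i + divg u x * ∑ i, v x i * w x i

theorem cform_eq_setIntegral {d : ℕ} (Ω : Set (Fin d → ℝ)) (u v w : (Fin d → ℝ) → (Fin d → ℝ)) :
    cform Ω u v w = ∫ x in Ω, cformIntegrand u v w x :=
  rfl

theorem cformIntegrand_add_half_eq_divg_emacFlux {d : ℕ} {u v : (Fin d → ℝ) → (Fin d → ℝ)}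
    {x : Fin d → ℝ} (hu : DifferentiableAt ℝ u x) (hv : DifferentiableAt ℝ v x) :
    cformIntegrand u v u x + 1 / 2 * cformIntegrand v u u x = divg (emacFlux u v) x := by
  have huv := differentiableAt_sum_mul hu hv
  have huu := (differentiableAt_sum_mul hu hu).const_mul (1 / 2 : ℝ)
  unfold emacFlux
  rw [divg_add (huv.fun_smul hu) (huu.fun_smul hv), divg_smul huv hu, divg_smul huu hv]
  simp only [fderiv_const_mul (differentiableAt_sum_mul hu hu), smul_apply, smul_eq_mul,
    fderiv_sum_mul_apply hu hv, fderiv_sum_mul_apply hu hu, cformIntegrand, symGrad, divg]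
  -- the difference is antisymmetric under exchanging the two summation indices
  rw [← sub_eq_zero]
  simp only [mul_sum, sum_mul, ← sum_add_distrib, ← sum_sub_distrib]
  exact sum_sum_eq_zero_of_add_swap_eq_zero _ fun i j => by ring

theorem continuous_cformIntegrand {d : ℕ} {u v w : (Fin d → ℝ) → (Fin d → ℝ)}
    (hu : ContDiff ℝ 1 u) (hv : Continuous v) (hw : Continuous w) :
    Continuous (cformIntegrand u v w) := by
  have hpd := continuous_pd hu
  unfold cformIntegrand symGrad divg
  fun_prop

theorem support_cformIntegrand_subset {d : ℕ} (u v w : (Fin d → ℝ) → (Fin d → ℝ)) :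
    Function.support (cformIntegrand u v w) ⊆ Function.support w := fun y hy => by
  by_contra h
  exact hy (by simp [cformIntegrand, Function.notMem_support.1 h])

theorem integrable_cformIntegrand {d : ℕ} {u v w : (Fin d → ℝ) → (Fin d → ℝ)}
    (hu : ContDiff ℝ 1 u) (hv : Continuous v) (hw : Continuous w) (hws : HasCompactSupport w) :
    Integrable (cformIntegrand u v w) :=
  (continuous_cformIntegrand hu hv hw).integrable_of_hasCompactSupport
    (hws.mono (support_cformIntegrand_subset u v w))

theorem cform_skew_identity_general {d : ℕ} (Ω : Set (Fin d → ℝ))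
    (u v : (Fin d → ℝ) → (Fin d → ℝ))
    (hu : ContDiff ℝ 1 u) (hus : HasCompactSupport u) (husupp : tsupport u ⊆ Ω)
    (hv : ContDiff ℝ 1 v) :
    cform Ω u v u = -(1 / 2) * cform Ω v u u := by
  have hI₁ := integrable_cformIntegrand hu hv.continuous hu.continuous hus
  have hI₂ := integrable_cformIntegrand hv hu.continuous hu.continuous hus
  have hflux_supp := support_emacFlux_subset u v
  have hsum : cform Ω u v u + 1 / 2 * cform Ω v u u = 0 := by
    rw [cform_eq_setIntegral, cform_eq_setIntegral, ← integral_const_mul,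
      ← integral_add hI₁.integrableOn (hI₂.integrableOn.const_mul _)]
    simp_rw [cformIntegrand_add_half_eq_divg_emacFlux (hu.differentiable one_ne_zero _)
      (hv.differentiable one_ne_zero _)]
    exact setIntegral_divg_eq_zero (contDiff_emacFlux hu hv) (hus.mono hflux_supp)
      ((closure_mono hflux_supp).trans husupp)
  linarith

theorem cform_skew_identity {d : ℕ} (hd : d = 2 ∨ d = 3) (Ω : Set (Fin d → ℝ))
    (hΩ : IsOpen Ω) (hΩb : Bornology.IsBounded Ω)
    (u v : (Fin d → ℝ) → (Fin d → ℝ))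
    (hu : ContDiff ℝ 1 u) (hus : HasCompactSupport u) (husupp : tsupport u ⊆ Ω)
    (hv : ContDiff ℝ 1 v) (hvs : HasCompactSupport v) (hvsupp : tsupport v ⊆ Ω) :
    cform Ω u v u = -(1 / 2) * cform Ω v u u :=
  cform_skew_identity_general Ω u v hu hus husupp hv
end
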